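/- arXiv:math/0308192 — 2 statements merged into one kernel-verified Lean document; each statement's English description precedes it below -/
import Mathlib

section
/- Let S be a self-adjoint element of a unital C*-algebra and let λ ∈ M_m(ℂ) with Im λ positive definite. Then λ ⊗ 1 − 1_m ⊗ S (in M_m(ℂ) ⊗ A) is invertible and ‖(λ ⊗ 1 − 1_m ⊗ S)⁻¹‖ ≤ ‖(Im λ)⁻¹‖. -/
/-!
Split `λ = Re λ + i Im λ`, so that `λ ⊗ 1 − 1 ⊗ S = h + i p` with `h` self-adjoint and `p` strictly
positive. Writing `p = b⋆ b` with `b` invertible, `h + i p = b⋆ (k + i) b` where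
`k = (b⋆)⁻¹ h b⁻¹` is self-adjoint; since `k` has real spectrum, `‖(k + i)⁻¹‖ ≤ 1`. Hence
`‖(h + i p)⁻¹‖ ≤ ‖b⁻¹‖² = ‖b⁻¹ (b⁻¹)⋆‖ = ‖p⁻¹‖`, and `‖p⁻¹‖ = ‖(Im λ)⁻¹‖` as the embedding of
`M_m(ℂ)` is isometric.
-/

open Matrix Complex
open scoped ComplexOrder

/-- The operator norm of a complex matrix. -/
noncomputable def matOpNorm {m : ℕ} (a : Matrix (Fin m) (Fin m) ℂ) : ℝ :=
  ‖Matrix.toEuclideanCLM (𝕜 := ℂ) a‖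

/-- The matrix imaginary part `Im λ = (λ − λ*)/(2i)`. -/
noncomputable def imPart {m : ℕ} (a : Matrix (Fin m) (Fin m) ℂ) :
    Matrix (Fin m) (Fin m) ℂ :=
  ((2 * I)⁻¹ : ℂ) • (a - aᴴ)

open scoped ComplexStarModule

theorem map_ringInverse_of_isUnit {M N F : Type*} [MonoidWithZero M] [MonoidWithZero N]
    [FunLike F M N] [MonoidHomClass F M N] (f : F) {x : M} (hx : IsUnit x) :
    f (Ring.inverse x) = Ring.inverse (f x) := by
  obtain ⟨u, rfl⟩ := hx
  rw [Ring.inverse_unit]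
  change _ = Ring.inverse ((Units.map (f : M →* N) u : N))
  rw [Ring.inverse_unit]
  rfl

theorem imPart_eq_imaginaryPart {m : ℕ} (a : Matrix (Fin m) (Fin m) ℂ) :
    imPart a = (ℑ a : Matrix (Fin m) (Fin m) ℂ) := by
  have h : ((2 * I)⁻¹ : ℂ) = -I * ((2 : ℝ)⁻¹ : ℝ) := by
    field_simp
    simp
  rw [imPart, imaginaryPart_apply_coe, h, mul_smul, star_eq_conjTranspose]
  rfl

section CStarAlgebra

variable {B : Type*} [CStarAlgebra B]

theorem IsSelfAdjoint.isUnit_add_I_smul_one_and_norm_ringInverse_le_one {a : B}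
    (ha : IsSelfAdjoint a) :
    IsUnit (a + I • 1) ∧ ‖Ring.inverse (a + I • 1)‖ ≤ 1 := by
  have hspec : ∀ z ∈ spectrum ℂ a, z + I ≠ 0 := fun z hz h0 => by
    simpa [ha.im_eq_zero_of_mem_spectrum hz] using congrArg Complex.im h0
  have hcfc : cfc (· + I) a = a + I • 1 := by
    rw [cfc_add a (fun z : ℂ => z) (fun _ : ℂ => I), cfc_id' ℂ a, cfc_const I a,
      Algebra.algebraMap_eq_smul_one]
  rw [← hcfc, ← cfc_inv _ a hspec]
  refine ⟨(isUnit_cfc_iff _ a).mpr hspec, norm_cfc_le zero_le_one fun z hz => ?_⟩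
  have hz : (1 : ℝ) ≤ ‖z + I‖ := by
    simpa [ha.im_eq_zero_of_mem_spectrum hz] using Complex.abs_im_le_norm (z + I)
  simpa using inv_le_one_of_one_le₀ hz

theorem add_I_smul_star_mul_self_eq (h : B) (b : Bˣ) :
    h + I • (star (b : B) * b) = star (b : B) * (star (↑b⁻¹ : B) * h * ↑b⁻¹ + I • 1) * b := by
  have hstar : star (b : B) * star (↑b⁻¹ : B) = 1 := by
    rw [← star_mul, Units.inv_mul, star_one]
  rw [mul_add, add_mul, mul_smul_comm, mul_one, smul_mul_assoc]
  congr 1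
  calc h = star (b : B) * star (↑b⁻¹ : B) * h * (↑b⁻¹ * ↑b) := by
        rw [hstar, Units.inv_mul, one_mul, mul_one]
    _ = _ := by noncomm_ring

theorem IsSelfAdjoint.isUnit_add_I_smul_and_norm_ringInverse_le [PartialOrder B]
    [StarOrderedRing B] {h p : B} (hh : IsSelfAdjoint h) (hp : IsStrictlyPositive p) :
    IsUnit (h + I • p) ∧ ‖Ring.inverse (h + I • p)‖ ≤ ‖Ring.inverse p‖ := by
  obtain ⟨_, ⟨b, rfl⟩, rfl⟩ := CStarAlgebra.isStrictlyPositive_iff_eq_star_mul_self.mp hp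
  obtain ⟨hunit, hnorm⟩ :=
    (hh.conjugate' (↑b⁻¹ : B)).isUnit_add_I_smul_one_and_norm_ringInverse_le_one
  have hstar_inv : Ring.inverse (star (b : B)) = star (↑b⁻¹ : B) := by
    rw [← Units.coe_star, Ring.inverse_unit, Units.coe_star_inv]
  rw [add_I_smul_star_mul_self_eq]
  refine ⟨(b.isUnit.star.mul hunit).mul b.isUnit, ?_⟩
  rw [Ring.inverse_mul (.inr b.isUnit), Ring.inverse_mul (.inl b.isUnit.star),
    Ring.inverse_mul (.inr b.isUnit), hstar_inv, Ring.inverse_unit, CStarRing.norm_self_mul_star]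
  calc ‖(↑b⁻¹ : B) * (Ring.inverse (star (↑b⁻¹ : B) * h * ↑b⁻¹ + I • 1) * star (↑b⁻¹ : B))‖
      ≤ ‖(↑b⁻¹ : B)‖ * (1 * ‖star (↑b⁻¹ : B)‖) := by
        refine (norm_mul_le _ _).trans (by gcongr; exact (norm_mul_le _ _).trans (by gcongr))
    _ = ‖(↑b⁻¹ : B)‖ * ‖(↑b⁻¹ : B)‖ := by rw [one_mul, norm_star]

end CStarAlgebra

theorem resolvent_isUnit_and_norm_inv_le_general {m : ℕ} {B : Type*} [CStarAlgebra B]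
    (φ : Matrix (Fin m) (Fin m) ℂ →⋆ₐ[ℂ] B)
    (hφ : ∀ x, ‖φ x‖ = matOpNorm x)
    (S : B) (hS : IsSelfAdjoint S)
    (lam : Matrix (Fin m) (Fin m) ℂ) (hlam : (imPart lam).PosDef) :
    IsUnit (φ lam - S) ∧
      ‖Ring.inverse (φ lam - S)‖ ≤ matOpNorm (imPart lam)⁻¹ := by
  let _ := CStarAlgebra.spectralOrder B
  let _ := CStarAlgebra.spectralOrderedRing B
  have hpos : IsStrictlyPositive (φ (imPart lam)) := by
    open scoped MatrixOrder in
    exact (hlam.isUnit.map φ).isStrictlyPositive (map_nonneg φ hlam.posSemidef.nonneg)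
  have hdecomp : φ lam - S = (φ (ℜ lam) - S) + I • φ (imPart lam) := by
    conv_lhs => rw [← realPart_add_I_smul_imaginaryPart lam]
    rw [imPart_eq_imaginaryPart, map_add, map_smul]
    abel
  rw [hdecomp, ← hφ, nonsing_inv_eq_ringInverse, map_ringInverse_of_isUnit φ hlam.isUnit]
  exact (((ℜ lam).2.map φ).sub hS).isUnit_add_I_smul_and_norm_ringInverse_le hpos

/-- Let `S` be a self-adjoint element of a unital C*-algebra `B` and
`λ ∈ M_m(ℂ)` with `Im λ` positive definite.  Realizing the C*-tensor product
`M_m(ℂ) ⊗ A` as a unital C*-algebra `B` via an isometric unital *-homomorphism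
`φ : M_m(ℂ) → B` (the copy `a ↦ a ⊗ 1`) whose range commutes with `S` (the copy
`1_m ⊗ S` of a selfadjoint `S ∈ A`), the element `λ ⊗ 1 − 1_m ⊗ S` is invertible and
`‖(λ ⊗ 1 − 1_m ⊗ S)⁻¹‖ ≤ ‖(Im λ)⁻¹‖`. -/
theorem resolvent_isUnit_and_norm_inv_le {m : ℕ} {B : Type*} [CStarAlgebra B]
    (φ : Matrix (Fin m) (Fin m) ℂ →⋆ₐ[ℂ] B)
    (hφ : ∀ x, ‖φ x‖ = matOpNorm x)
    (S : B) (hS : IsSelfAdjoint S) (hcomm : ∀ x, Commute (φ x) S)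
    (lam : Matrix (Fin m) (Fin m) ℂ) (hlam : (imPart lam).PosDef) :
    IsUnit (φ lam - S) ∧
      ‖Ring.inverse (φ lam - S)‖ ≤ matOpNorm (imPart lam)⁻¹ :=
  resolvent_isUnit_and_norm_inv_le_general φ hφ S hS lam hlam
end

section
/- Let F: ℝ → [0,1] be the cumulative distribution function of a nonnegative random variable Z (i.e., F(t) = P(Z ≤ t)), and suppose F(2 + ε) ≥ 1 − 2n·exp(−nε²/2) for all ε > 0. Then, with ε₀ = √(2 log(2n)/n), for every integer k ≥ 2: E{Z^k} ≤ (2 + ε₀)^k + k·∫₀^∞ (2 + t + ε₀)^{k−1}·e^{−nt²/2} dt. -/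
/-!
By the layer-cake formula, `E Z^k = ∫₀^∞ k t^{k-1} P(Z > t) dt`. Bound the probability by `1`
below `M = 2 + ε₀` and, above `M`, by `1 - F(t) ≤ 2n e^{-n(t-2)²/2} ≤ e^{-n(t-M)²/2}`: the
threshold `ε₀` is chosen so that `2n e^{-nε₀²/2} = 1`. The first part contributes `M^k`, the
second, after the shift `t = M + s`, the Gaussian integral.

Since `Z` is not assumed measurable, the layer-cake formula is applied to a measurable
minorant with the same `k`-th moment.
-/

open MeasureTheory Set
open scoped ENNReal

theorem exp_neg_mul_add_sq_le {n ε s : ℝ} (hn : 0 ≤ n) (hε : 0 ≤ ε) (hs : 0 ≤ s) :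
    Real.exp (-n * (ε + s) ^ 2 / 2) ≤
      Real.exp (-n * ε ^ 2 / 2) * Real.exp (-n * s ^ 2 / 2) := by
  rw [← Real.exp_add, Real.exp_le_exp]
  nlinarith [mul_nonneg hn (mul_nonneg hε hs)]

theorem exp_neg_mul_sqrt_log_sq {n : ℝ} (hn : 1 ≤ 2 * n) :
    Real.exp (-n * Real.sqrt (2 * Real.log (2 * n) / n) ^ 2 / 2) = (2 * n)⁻¹ := by
  have hn₀ : 0 < n := by linarith
  rw [Real.sq_sqrt (by have := Real.log_nonneg hn; positivity),
    ← Real.exp_log (by positivity : 0 < 2 * n), ← Real.exp_neg, Real.exp_log (by positivity)]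
  congr 1
  field_simp

theorem two_mul_mul_exp_neg_mul_sqrt_log_add_sq_le {n s : ℝ} (hn : 1 ≤ 2 * n) (hs : 0 ≤ s) :
    2 * n * Real.exp (-n * (Real.sqrt (2 * Real.log (2 * n) / n) + s) ^ 2 / 2) ≤
      Real.exp (-n * s ^ 2 / 2) := by
  calc _ ≤ 2 * n * (Real.exp (-n * Real.sqrt (2 * Real.log (2 * n) / n) ^ 2 / 2) *
          Real.exp (-n * s ^ 2 / 2)) := by
        gcongr
        exact exp_neg_mul_add_sq_le (by linarith) (Real.sqrt_nonneg _) hs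
    _ = Real.exp (-n * s ^ 2 / 2) := by
        rw [exp_neg_mul_sqrt_log_sq hn]
        field_simp [show n ≠ 0 by linarith]

theorem integrableOn_Ioi_add_pow_mul_exp_neg_mul_sq {b : ℝ} (hb : 0 < b) (M : ℝ) (m : ℕ) :
    IntegrableOn (fun s : ℝ => (M + s) ^ m * Real.exp (-b * s ^ 2)) (Ioi 0) := by
  simp_rw [add_pow, Finset.sum_mul]
  refine integrable_finsetSum _ fun i _ => ?_
  have h := (integrableOn_rpow_mul_exp_neg_mul_sq hb (s := (m - i : ℕ))
    (by linarith [(m - i).cast_nonneg (α := ℝ)])).const_mul (M ^ i * m.choose i)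
  refine IntegrableOn.congr_fun h (fun s _ => ?_) measurableSet_Ioi
  rw [Real.rpow_natCast]
  ring

theorem lintegral_Ioc_ofReal_mul_pow_pred {M : ℝ} (hM : 0 ≤ M) {k : ℕ} (hk : k ≠ 0) :
    ∫⁻ t in Ioc 0 M, ENNReal.ofReal (k * t ^ (k - 1)) = ENNReal.ofReal (M ^ k) := by
  obtain ⟨j, rfl⟩ := Nat.exists_eq_succ_of_ne_zero hk
  have hcont : Continuous fun t : ℝ => ((j + 1 : ℕ) : ℝ) * t ^ j := by fun_prop
  rw [Nat.succ_sub_one, ← ofReal_integral_eq_lintegral_ofReal hcont.integrableOn_Ioc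
    (ae_restrict_of_forall_mem measurableSet_Ioc fun t ht => by have := ht.1.le; positivity),
    ← intervalIntegral.integral_of_le hM, intervalIntegral.integral_const_mul, integral_pow]
  congr 1
  push_cast
  field_simp
  ring

section LayerCake

variable {α : Type*} [MeasurableSpace α]

theorem lintegral_ofReal_pow_eq_lintegral_meas_lt_mul (μ : Measure α) {f : α → ℝ}
    (hf_nn : 0 ≤ᵐ[μ] f) (hf : AEMeasurable f μ) {k : ℕ} (hk : k ≠ 0) :
    ∫⁻ a, ENNReal.ofReal (f a ^ k) ∂μ =
      ∫⁻ t in Ioi 0, μ {a | t < f a} * ENNReal.ofReal (k * t ^ (k - 1)) := by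
  have h := lintegral_rpow_eq_lintegral_meas_lt_mul μ hf_nn hf (p := k) (by positivity)
  simp_rw [Real.rpow_natCast] at h
  rw [h, ← lintegral_const_mul' _ _ ENNReal.ofReal_ne_top]
  refine setLIntegral_congr_fun measurableSet_Ioi fun t _ => ?_
  rw [← Nat.cast_pred (Nat.pos_of_ne_zero hk), Real.rpow_natCast,
    ENNReal.ofReal_mul (Nat.cast_nonneg _)]
  ring

theorem exists_measurable_le_lintegral_ofReal_pow_eq (μ : Measure α) {f : α → ℝ}
    (hf : ∀ a, 0 ≤ f a) {k : ℕ} (hk : k ≠ 0) :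
    ∃ g : α → ℝ, Measurable g ∧ 0 ≤ g ∧ g ≤ f ∧
      ∫⁻ a, ENNReal.ofReal (f a ^ k) ∂μ = ∫⁻ a, ENNReal.ofReal (g a ^ k) ∂μ := by
  obtain ⟨G, hG, hGf, heq⟩ :=
    exists_measurable_le_lintegral_eq μ fun a => ENNReal.ofReal (f a ^ k)
  have hG_ne_top a : G a ≠ ∞ := ((hGf a).trans_lt ENNReal.ofReal_lt_top).ne
  refine ⟨fun a => (G a).toReal ^ (k⁻¹ : ℝ),
    (Real.continuous_rpow_const (by positivity)).measurable.comp hG.ennreal_toReal,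
    fun a => by positivity, fun a => ?_, heq.trans (lintegral_congr fun a => ?_)⟩
  · calc (G a).toReal ^ (k⁻¹ : ℝ) ≤ (f a ^ k) ^ (k⁻¹ : ℝ) :=
          Real.rpow_le_rpow ENNReal.toReal_nonneg
            (ENNReal.toReal_le_of_le_ofReal (pow_nonneg (hf a) k) (hGf a)) (by positivity)
      _ = f a := Real.pow_rpow_inv_natCast (hf a) hk
  · rw [Real.rpow_inv_natCast_pow ENNReal.toReal_nonneg hk, ENNReal.ofReal_toReal (hG_ne_top a)]

theorem measure_lt_le_ofReal_one_sub_toReal {μ : Measure α} [IsProbabilityMeasure μ]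
    {f g : α → ℝ} (hg : Measurable g) (hgf : g ≤ f) (t : ℝ) :
    μ {a | t < g a} ≤ ENNReal.ofReal (1 - (μ {a | f a ≤ t}).toReal) := by
  have hmeas : MeasurableSet {a | t < g a} := measurableSet_lt measurable_const hg
  rw [ENNReal.ofReal_sub _ ENNReal.toReal_nonneg, ENNReal.ofReal_one,
    ENNReal.ofReal_toReal (measure_ne_top _ _), ← compl_compl {a | t < g a},
    prob_compl_eq_one_sub hmeas.compl]
  refine tsub_le_tsub_left (measure_mono fun a ha => ?_) 1
  exact not_lt.2 ((hgf a).trans ha)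

theorem lintegral_ofReal_pow_le_of_meas_lt_le {μ : Measure α} [IsZeroOrProbabilityMeasure μ]
    {f : α → ℝ} (hf_nn : 0 ≤ f) (hf : Measurable f) {k : ℕ} (hk : k ≠ 0)
    {M : ℝ} (hM : 0 ≤ M)
    {g : ℝ → ℝ} (htail : ∀ s > 0, μ {a | M + s < f a} ≤ ENNReal.ofReal (g s)) :
    ∫⁻ a, ENNReal.ofReal (f a ^ k) ∂μ ≤
      ENNReal.ofReal (M ^ k) + ∫⁻ s in Ioi 0, ENNReal.ofReal (k * (M + s) ^ (k - 1) * g s) := by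
  rw [lintegral_ofReal_pow_eq_lintegral_meas_lt_mul μ (ae_of_all _ hf_nn) hf.aemeasurable hk]
  nth_rw 1 [← Ioc_union_Ioi_eq_Ioi hM]
  rw [lintegral_union measurableSet_Ioi (Ioc_disjoint_Ioi le_rfl)]
  refine add_le_add ?_ ?_
  · calc _ ≤ ∫⁻ t in Ioc 0 M, ENNReal.ofReal (k * t ^ (k - 1)) :=
          lintegral_mono fun t => mul_le_of_le_one_left' prob_le_one
      _ = _ := lintegral_Ioc_ofReal_mul_pow_pred hM hk
  · rw [← (measurePreserving_add_left volume M).setLIntegral_comp_preimage_emb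
      (measurableEmbedding_addLeft M), preimage_const_add_Ioi, sub_self]
    refine setLIntegral_mono' measurableSet_Ioi fun s hs => ?_
    have hs : (0 : ℝ) < s := hs
    rw [ENNReal.ofReal_mul (p := k * (M + s) ^ (k - 1)) (by positivity), mul_comm]
    exact mul_le_mul_right (htail s hs) _

end LayerCake

/-- Let `F` be the cumulative distribution function of a nonnegative
random variable `Z`, and suppose `F(2+ε) ≥ 1 − 2n·exp(−nε²/2)` for all `ε > 0`.  Then,
with `ε₀ = √(2 log(2n)/n)`, for every `k ≥ 2`:
`E{Z^k} ≤ (2+ε₀)^k + k·∫₀^∞ (2+t+ε₀)^{k−1} e^{−nt²/2} dt`. -/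
theorem moment_bound_of_cdf_tail {Ω : Type*} [MeasureSpace Ω]
    [IsProbabilityMeasure (volume : Measure Ω)]
    (n : ℕ) (hn : 1 ≤ n) (Z : Ω → ℝ) (hZ : ∀ ω, 0 ≤ Z ω)
    (F : ℝ → ℝ) (hF : ∀ t : ℝ, F t = (volume {ω | Z ω ≤ t}).toReal)
    (htail : ∀ ε : ℝ, 0 < ε → 1 - 2 * n * Real.exp (-(n : ℝ) * ε ^ 2 / 2) ≤ F (2 + ε))
    (k : ℕ) (hk : 2 ≤ k) :
    ∫⁻ ω, ENNReal.ofReal (Z ω ^ k) ≤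
      ENNReal.ofReal ((2 + Real.sqrt (2 * Real.log (2 * n) / n)) ^ k +
        k * ∫ t in Set.Ioi (0 : ℝ),
          (2 + t + Real.sqrt (2 * Real.log (2 * n) / n)) ^ (k - 1) *
            Real.exp (-(n : ℝ) * t ^ 2 / 2)) := by
  set ε₀ := Real.sqrt (2 * Real.log (2 * n) / n)
  have hn₁ : (1 : ℝ) ≤ n := by exact_mod_cast hn
  have hk₀ : k ≠ 0 := by omega
  obtain ⟨V, hV, hV₀, hVZ, hZV⟩ :=
    exists_measurable_le_lintegral_ofReal_pow_eq volume hZ hk₀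
  have hdecay : ∀ s > 0,
      volume {ω | 2 + ε₀ + s < V ω} ≤ ENNReal.ofReal (Real.exp (-n * s ^ 2 / 2)) := by
    intro s hs
    refine (measure_lt_le_ofReal_one_sub_toReal hV hVZ _).trans (ENNReal.ofReal_le_ofReal ?_)
    have hcdf := htail (ε₀ + s) (by positivity)
    rw [← add_assoc, hF] at hcdf
    linarith [two_mul_mul_exp_neg_mul_sqrt_log_add_sq_le (n := n) (by linarith) hs.le]
  have hnn : ∀ s ∈ Ioi (0 : ℝ),
      0 ≤ k * (2 + ε₀ + s) ^ (k - 1) * Real.exp (-n * s ^ 2 / 2) :=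
    fun s hs => by have : (0 : ℝ) < s := hs; positivity
  have hint : IntegrableOn
      (fun s => k * (2 + ε₀ + s) ^ (k - 1) * Real.exp (-n * s ^ 2 / 2)) (Ioi 0) :=
    IntegrableOn.congr_fun ((integrableOn_Ioi_add_pow_mul_exp_neg_mul_sq (b := n / 2)
      (by positivity) (2 + ε₀) (k - 1)).const_mul k) (fun s _ => by ring_nf) measurableSet_Ioi
  rw [hZV]
  refine (lintegral_ofReal_pow_le_of_meas_lt_le hV₀ hV hk₀ (by positivity) hdecay).trans_eq ?_
  rw [← ofReal_integral_eq_lintegral_ofReal hint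
      (ae_restrict_of_forall_mem measurableSet_Ioi hnn),
    ← ENNReal.ofReal_add (by positivity) (setIntegral_nonneg measurableSet_Ioi hnn),
    ← integral_const_mul]
  congr 3 with s
  ring
end
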